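/- arXiv:1901.03492 — 3 statements merged into one kernel-verified Lean document; each statement's English description precedes it below -/
import Mathlib

section
/- Let N be a normal subgroup of a finite group G, let θ be an irreducible complex character of N, let T = I_G(θ) be the inertia (stabilizer) subgroup of θ in G, and let χ be an irreducible character of G lying over θ (i.e., θ is a constituent of the restriction of χ to N). Then θ(1) divides χ(1) and the index |G : T| divides the quotient χ(1)/θ(1). -/
/-!
Let `P` be the isotypic projection `(θ(1)/|N|) ∑ₙ θ(n⁻¹) χ(n)` of `χ|_N` onto its `θ`-part, so
that `tr P = θ(1) e` with `e = ⟨χ|_N, θ⟩ ≠ 0`. Its `G`-conjugates are the isotypic projections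
for the conjugates `θ^g`, and by the orthogonality of central idempotents two of them multiply to
zero unless the conjugates coincide, i.e. unless they come from the same coset of the inertia
group `T`. Hence `E = ∑_{g ∈ G} gPg⁻¹` satisfies `E² = |T| E`; it commutes with `G`, so by Schur
it is the scalar `|T|`, and taking traces gives `|T| χ(1) = |G| θ(1) e`, that is,
`χ(1) = |G : T| θ(1) e`.
-/

open Module CategoryTheory
open scoped ComplexConjugate

namespace MonoidHom

variable {k A H : Type*} [Group H] [Fintype H]

theorem sum_smul_mul_sum_smul [CommSemiring k] [Semiring A] [Algebra k A] (ρ : H →* A)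
    (f g : H → k) :
    (∑ a, f a • ρ a) * (∑ b, g b • ρ b) = ∑ m, (∑ a, f a * g (a⁻¹ * m)) • ρ m := by
  simp_rw [Finset.sum_mul_sum, smul_mul_smul_comm, ← map_mul, Finset.sum_smul]
  conv_rhs => rw [Finset.sum_comm]
  refine Finset.sum_congr rfl fun a _ => Fintype.sum_equiv (Equiv.mulLeft a) _ _ fun b => ?_
  simp

theorem commute_sum_smul [CommSemiring k] [Semiring A] [Algebra k A] (ρ : H →* A) (f : H → k)
    (hf : ∀ a b, f (b * a * b⁻¹) = f a) (h : H) : Commute (∑ a, f a • ρ a) (ρ h) := by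
  simp only [Commute, SemiconjBy, Finset.sum_mul, Finset.mul_sum, smul_mul_assoc, mul_smul_comm,
    ← map_mul]
  refine Fintype.sum_equiv (MulAut.conj h⁻¹).toEquiv _ _ fun a => ?_
  simp only [MulEquiv.toEquiv_eq_coe, MulEquiv.coe_toEquiv, MulAut.conj_apply, inv_inv]
  rw [← hf a h⁻¹, inv_inv]
  group

end MonoidHom

namespace FDRep

variable {G H : Type} [Group G] [Group H]

noncomputable abbrev res (V : FDRep ℂ G) (φ : H →* G) : FDRep ℂ H :=
  FDRep.of (V.ρ.comp φ)

theorem char_res (V : FDRep ℂ G) (φ : H →* G) (h : H) :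
    (V.res φ).character h = V.character (φ h) :=
  rfl

open Matrix in
open scoped ComplexOrder in
/-- In a basis, `A = ∑ₓ M(x)ᴴ M(x)` is positive definite and `M(g)ᴴ A M(g) = A`, so `M(g)ᴴ` is
conjugate to `M(g)⁻¹ = M(g⁻¹)`. -/
theorem char_inv [Fintype G] (V : FDRep ℂ G) (g : G) :
    V.character g⁻¹ = conj (V.character g) := by
  classical
  let M : G →* Matrix (Fin (finrank ℂ V)) (Fin (finrank ℂ V)) ℂ :=
    (LinearMap.toMatrixAlgEquiv (Module.finBasis ℂ V) : _ →* _).comp V.ρ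
  have hchar (x : G) : V.character x = (M x).trace :=
    LinearMap.trace_eq_matrix_trace ℂ (Module.finBasis ℂ V) _
  let A := ∑ x, (M x)ᴴ * M x
  have hA : IsUnit A.det := by
    rw [← isUnit_iff_isUnit_det]
    refine PosDef.isUnit ?_
    rw [show A = (M 1)ᴴ * M 1 + ∑ x ∈ {1}ᶜ, (M x)ᴴ * M x from
      Fintype.sum_eq_add_sum_compl 1 _, map_one, conjTranspose_one, one_mul]
    exact PosDef.one.add_posSemidef
      (posSemidef_sum _ fun x _ => posSemidef_conjTranspose_mul_self (M x))
  have hinv : (M g)ᴴ * A * M g = A := by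
    simp only [A, Finset.mul_sum, Finset.sum_mul]
    refine Fintype.sum_equiv (Equiv.mulRight g) _ _ fun x => ?_
    simp [M, conjTranspose_mul, Matrix.mul_assoc]
  have hunitary : (M g)ᴴ * A = A * M g⁻¹ := by
    conv_rhs => rw [← hinv]
    rw [Matrix.mul_assoc, ← map_mul, mul_inv_cancel, map_one, Matrix.mul_one]
  rw [hchar, hchar, starRingEnd_apply, ← trace_conjTranspose, ← Matrix.mul_one (M g)ᴴ,
    ← mul_nonsing_inv A hA, ← Matrix.mul_assoc, hunitary, trace_mul_comm, ← Matrix.mul_assoc,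
    nonsing_inv_mul A hA, Matrix.one_mul]

theorem finrank_pos_of_simple (V : FDRep ℂ G) [Simple V] : 0 < finrank ℂ V := by
  rw [Module.finrank_pos_iff, ← not_subsingleton_iff_nontrivial]
  intro h
  exact id_nonzero V
    (Action.Hom.ext (FGModuleCat.hom_ext (LinearMap.ext fun _ => Subsingleton.elim _ _)))

theorem exists_eq_smul_one_of_commute (V : FDRep ℂ G) [Simple V] (f : Module.End ℂ V)
    (hf : ∀ g, Commute f (V.ρ g)) : ∃ c : ℂ, f = c • 1 := by
  let F : V ⟶ V := ⟨FGModuleCat.ofHom f, fun g => by ext x; exact LinearMap.congr_fun (hf g) x⟩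
  obtain ⟨c, hc⟩ := endomorphism_simple_eq_smul_id ℂ F
  exact ⟨c, LinearMap.ext fun x => (congrArg (fun m : V ⟶ V => m.hom.hom.hom x) hc).symm⟩

theorem trace_eq_mul_finrank_of_mul_self_eq_smul (V : FDRep ℂ G) [Simple V]
    {E : Module.End ℂ V} (hE : ∀ g, Commute E (V.ρ g)) {c : ℂ} (hEE : E * E = c • E)
    (htr : LinearMap.trace ℂ V E ≠ 0) : LinearMap.trace ℂ V E = c * finrank ℂ V := by
  obtain ⟨l, rfl⟩ := exists_eq_smul_one_of_commute V E hE
  have htr_smul : LinearMap.trace ℂ V (l • 1) = l * finrank ℂ V := by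
    rw [map_smul, LinearMap.trace_one, smul_eq_mul]
  rw [htr_smul] at htr ⊢
  have := congrArg (LinearMap.trace ℂ V) hEE
  rw [smul_mul_smul_comm, one_mul, smul_smul, map_smul, map_smul, LinearMap.trace_one,
    smul_eq_mul, smul_eq_mul, mul_assoc, mul_assoc] at this
  rw [mul_right_cancel₀ htr this]

noncomputable def sumOfConjugates [Fintype G] (V : FDRep ℂ G) (f : Module.End ℂ V) :
    Module.End ℂ V :=
  ∑ g, V.ρ g * f * V.ρ g⁻¹

theorem commute_sumOfConjugates [Fintype G] (V : FDRep ℂ G) (f : Module.End ℂ V) (s : G) :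
    Commute (V.sumOfConjugates f) (V.ρ s) := by
  simp only [sumOfConjugates, Commute, SemiconjBy, Finset.sum_mul, Finset.mul_sum]
  refine (Fintype.sum_equiv (Equiv.mulLeft s) _ _ fun g => ?_).symm
  simp only [Equiv.coe_mulLeft, mul_inv_rev, map_mul, mul_assoc]
  rw [← map_mul V.ρ s⁻¹, inv_mul_cancel, map_one, mul_one]

theorem trace_sumOfConjugates [Fintype G] (V : FDRep ℂ G) (f : Module.End ℂ V) :
    LinearMap.trace ℂ V (V.sumOfConjugates f) = Nat.card G * LinearMap.trace ℂ V f := by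
  have hconj (g : G) : LinearMap.trace ℂ V (V.ρ g * f * V.ρ g⁻¹) = LinearMap.trace ℂ V f := by
    rw [LinearMap.trace_mul_cycle, ← map_mul, inv_mul_cancel, map_one, one_mul]
  simp only [sumOfConjugates, map_sum, hconj, Finset.sum_const, Finset.card_univ, nsmul_eq_mul,
    Nat.card_eq_fintype_card]

variable [Fintype H]

theorem sum_char_mul_char_inv (V W : FDRep ℂ H) :
    ∑ h, W.character h * V.character h⁻¹ = Nat.card H * finrank ℂ (V ⟶ W) := by
  have hcard : (Nat.card H : ℂ) ≠ 0 := Nat.cast_ne_zero.mpr Nat.card_pos.ne'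
  have := invertibleOfNonzero hcard
  rw [← scalar_product_char_eq_finrank_equivariant, mul_inv_cancel_left₀ hcard]

theorem simple_res_mulEquiv {H' : Type} [Group H'] [Fintype H'] (V : FDRep ℂ H) [hV : Simple V]
    (α : H' ≃* H) : Simple (V.res α.toMonoidHom) := by
  rw [simple_iff_char_is_norm_one] at hV ⊢
  simp only [char_res, MulEquiv.coe_toMonoidHom, map_inv]
  rw [Nat.card_congr α.toEquiv, ← hV]
  exact Equiv.sum_comp α.toEquiv fun h => V.character h * V.character h⁻¹

open scoped Classical in
theorem finrank_hom_eq_ite (V W : FDRep ℂ H) [Simple V] [Simple W] :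
    finrank ℂ (V ⟶ W) = if V.character = W.character then 1 else 0 := by
  split_ifs with h
  · have hsum := sum_char_mul_char_inv V W
    have hcard : (Nat.card H : ℂ) ≠ 0 := Nat.cast_ne_zero.mpr Nat.card_pos.ne'
    rw [← h, (simple_iff_char_is_norm_one V).mp inferInstance] at hsum
    exact_mod_cast (mul_eq_left₀ hcard).mp hsum.symm
  · rw [finrank_hom_simple_simple, if_neg]
    rintro ⟨i⟩
    exact h (char_iso i)

/-- The operator `∑ₐ W(a⁻¹) V(a)` commutes with `V`, so by Schur it is the scalar read off from its
trace. -/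
theorem finrank_mul_sum_char_inv_mul_char_mul (V W : FDRep ℂ H) [Simple V] (g : H) :
    finrank ℂ V * ∑ a, W.character a⁻¹ * V.character (g * a) =
      Nat.card H * finrank ℂ (W ⟶ V) * V.character g := by
  set F := ∑ a, W.character a⁻¹ • V.ρ a
  obtain ⟨c, hc⟩ := exists_eq_smul_one_of_commute V F
    (V.ρ.commute_sum_smul _ fun a b => by
      rw [mul_inv_rev, mul_inv_rev, inv_inv, ← mul_assoc, char_conj])
  have htrF : LinearMap.trace ℂ V F = Nat.card H * finrank ℂ (W ⟶ V) := by
    simp only [F, map_sum, map_smul, smul_eq_mul, ← sum_char_mul_char_inv]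
    exact Finset.sum_congr rfl fun _ _ => mul_comm _ _
  have htrgF : LinearMap.trace ℂ V (V.ρ g * F) =
      ∑ a, W.character a⁻¹ * V.character (g * a) := by
    simp only [F, Finset.mul_sum, mul_smul_comm, ← map_mul, map_sum, map_smul, smul_eq_mul]
    rfl
  rw [← htrgF, ← htrF, hc]
  simp only [mul_smul_comm, mul_one, map_smul, LinearMap.trace_one, smul_eq_mul]
  rw [character]
  ring

noncomputable def isotypicProj (V W : FDRep ℂ H) : Module.End ℂ V :=
  ((finrank ℂ W : ℂ) / Nat.card H) • ∑ h, W.character h⁻¹ • V.ρ h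

theorem trace_isotypicProj (V W : FDRep ℂ H) :
    LinearMap.trace ℂ V (isotypicProj V W) = finrank ℂ W * finrank ℂ (W ⟶ V) := by
  have hcard : (Nat.card H : ℂ) ≠ 0 := Nat.cast_ne_zero.mpr Nat.card_pos.ne'
  have hsum : ∑ h, W.character h⁻¹ * V.character h = Nat.card H * finrank ℂ (W ⟶ V) := by
    rw [← sum_char_mul_char_inv]
    exact Finset.sum_congr rfl fun _ _ => mul_comm _ _
  simp only [isotypicProj, map_smul, map_sum, smul_eq_mul]
  change _ * ∑ h, W.character h⁻¹ * V.character h = _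
  rw [hsum]
  field_simp

open scoped Classical in
theorem isotypicProj_mul_isotypicProj (V W₁ W₂ : FDRep ℂ H) [Simple W₁] [Simple W₂] :
    isotypicProj V W₁ * isotypicProj V W₂ =
      if W₁.character = W₂.character then isotypicProj V W₁ else 0 := by
  have hcard : (Nat.card H : ℂ) ≠ 0 := Nat.cast_ne_zero.mpr Nat.card_pos.ne'
  have hd₂ : (finrank ℂ W₂ : ℂ) ≠ 0 := Nat.cast_ne_zero.mpr (finrank_pos_of_simple W₂).ne'
  have hconv (m : H) : (finrank ℂ W₂ / Nat.card H : ℂ) *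
      ∑ a, W₁.character a⁻¹ * W₂.character (a⁻¹ * m)⁻¹ =
        finrank ℂ (W₁ ⟶ W₂) * W₂.character m⁻¹ := by
    have := finrank_mul_sum_char_inv_mul_char_mul W₂ W₁ m⁻¹
    simp only [mul_inv_rev, inv_inv]
    field_simp
    linear_combination this
  rw [isotypicProj, isotypicProj, smul_mul_smul_comm, V.ρ.sum_smul_mul_sum_smul]
  simp only [Finset.smul_sum, smul_smul, mul_assoc, hconv, finrank_hom_eq_ite]
  split_ifs with h
  · simp [h]
  · simp

section Normal

variable {N : Subgroup G} [N.Normal]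

/-- `θ^g(n) = θ(g n g⁻¹)`. -/
noncomputable abbrev conjugate (θ : FDRep ℂ N) (g : G) : FDRep ℂ N :=
  θ.res (MulAut.conjNormal g).toMonoidHom

theorem char_conjugate_eq_iff (θ : FDRep ℂ N) (x y : G) :
    (θ.conjugate x).character = (θ.conjugate y).character ↔
      (θ.conjugate (x * y⁻¹)).character = θ.character := by
  simp only [funext_iff, char_res, MulEquiv.coe_toMonoidHom, map_mul, MulAut.mul_apply]
  constructor
  · intro h n
    rw [h, map_inv, MulAut.apply_inv_self]
  · intro h n
    rw [← h (MulAut.conjNormal y n), map_inv, MulAut.inv_apply_self]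

variable [Fintype N]

theorem conj_isotypicProj_res (V : FDRep ℂ G) (θ : FDRep ℂ N) (g : G) :
    V.ρ g * isotypicProj (V.res N.subtype) θ * V.ρ g⁻¹ =
      isotypicProj (V.res N.subtype) (θ.conjugate g⁻¹) := by
  simp only [isotypicProj, mul_smul_comm, smul_mul_assoc, Finset.mul_sum, Finset.sum_mul]
  congr 1
  refine Fintype.sum_equiv (MulAut.conjNormal g).toEquiv _ _ fun n => ?_
  simp only [MulEquiv.toEquiv_eq_coe, MulEquiv.coe_toEquiv]
  congr 1
  · rw [char_res, ← map_inv, MulEquiv.coe_toMonoidHom, map_inv, MulAut.inv_apply_self]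
  · change V.ρ g * V.ρ n * V.ρ g⁻¹ = V.ρ (MulAut.conjNormal g n : G)
    rw [MulAut.conjNormal_apply, map_mul, map_mul]

open scoped Classical in
theorem conj_isotypicProj_mul_conj_isotypicProj (V : FDRep ℂ G) (θ : FDRep ℂ N) [Simple θ]
    (u v : G) :
    V.ρ u * isotypicProj (V.res N.subtype) θ * V.ρ u⁻¹ *
        (V.ρ v * isotypicProj (V.res N.subtype) θ * V.ρ v⁻¹) =
      if (θ.conjugate (u⁻¹ * v)).character = θ.character then
        V.ρ u * isotypicProj (V.res N.subtype) θ * V.ρ u⁻¹ else 0 := by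
  have := simple_res_mulEquiv θ (MulAut.conjNormal u⁻¹)
  have := simple_res_mulEquiv θ (MulAut.conjNormal v⁻¹)
  rw [conj_isotypicProj_res, conj_isotypicProj_res, isotypicProj_mul_isotypicProj]
  simp only [char_conjugate_eq_iff, inv_inv]

/-- `gPg⁻¹ * hPh⁻¹` is `gPg⁻¹` for the `|T|` elements `h ∈ gT` and zero otherwise. -/
theorem sumOfConjugates_isotypicProj_mul_self [Fintype G] (V : FDRep ℂ G) (θ : FDRep ℂ N)
    [Simple θ] (T : Subgroup G) (hT : ∀ g, g ∈ T ↔ (θ.conjugate g).character = θ.character) :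
    V.sumOfConjugates (isotypicProj (V.res N.subtype) θ) *
        V.sumOfConjugates (isotypicProj (V.res N.subtype) θ) =
      (Nat.card T : ℂ) • V.sumOfConjugates (isotypicProj (V.res N.subtype) θ) := by
  classical
  have hcard (u : G) : (Finset.univ.filter fun v => u⁻¹ * v ∈ T).card = Nat.card T := by
    rw [← Fintype.card_subtype, Nat.card_eq_fintype_card]
    exact Fintype.card_congr (Equiv.subtypeEquiv (Equiv.mulLeft u⁻¹) fun v => Iff.rfl)
  simp only [sumOfConjugates, Finset.sum_mul_sum, Finset.smul_sum]
  refine Finset.sum_congr rfl fun u _ => ?_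
  refine (Finset.sum_congr rfl fun v _ =>
    conj_isotypicProj_mul_conj_isotypicProj V θ u v).trans ?_
  simp only [← hT]
  rw [Finset.sum_ite, Finset.sum_const_zero, add_zero, Finset.sum_const, hcard,
    Nat.cast_smul_eq_nsmul]

theorem finrank_eq_index_mul_finrank_mul_finrank_hom [Fintype G] (χ : FDRep ℂ G) [Simple χ]
    (θ : FDRep ℂ N) [Simple θ] (hθχ : finrank ℂ (θ ⟶ χ.res N.subtype) ≠ 0) (T : Subgroup G)
    (hT : ∀ g, g ∈ T ↔ (θ.conjugate g).character = θ.character) :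
    finrank ℂ χ = T.index * (finrank ℂ θ * finrank ℂ (θ ⟶ χ.res N.subtype)) := by
  set e := finrank ℂ (θ ⟶ χ.res N.subtype)
  set E := χ.sumOfConjugates (isotypicProj (χ.res N.subtype) θ)
  have htr : LinearMap.trace ℂ χ E = Nat.card G * (finrank ℂ θ * e) :=
    (trace_sumOfConjugates _ _).trans (congrArg _ (trace_isotypicProj (χ.res N.subtype) θ))
  have htr_ne : LinearMap.trace ℂ χ E ≠ 0 := by
    rw [htr]
    exact mul_ne_zero (Nat.cast_ne_zero.mpr Nat.card_pos.ne') (mul_ne_zero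
      (Nat.cast_ne_zero.mpr (finrank_pos_of_simple θ).ne') (Nat.cast_ne_zero.mpr hθχ))
  have hdeg := trace_eq_mul_finrank_of_mul_self_eq_smul χ (commute_sumOfConjugates χ _)
    (sumOfConjugates_isotypicProj_mul_self χ θ T hT) htr_ne
  rw [htr, ← T.card_mul_index] at hdeg
  have : Nat.card T * (T.index * (finrank ℂ θ * e)) = Nat.card T * finrank ℂ χ := by
    rw [← mul_assoc]
    exact_mod_cast hdeg
  exact (Nat.eq_of_mul_eq_mul_left Nat.card_pos this).symm

end Normal

end FDRep

theorem clifford_degree_divides_general {G : Type} [Group G] [Fintype G]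
    (N : Subgroup G) [Fintype N] (hN : N.Normal)
    (θ : FDRep ℂ N) (hθ : CategoryTheory.Simple θ)
    (χ : FDRep ℂ G) (hχ : CategoryTheory.Simple χ)
    (hover : ∑ n : N, χ.character (n : G) * (starRingEnd ℂ) (θ.character n) ≠ 0)
    (T : Subgroup G)
    (hT : ∀ g : G, g ∈ T ↔
      ∀ n : N, θ.character ⟨g * (n : G) * g⁻¹, hN.conj_mem n.1 n.2 g⟩ = θ.character n) :
    Module.finrank ℂ θ ∣ Module.finrank ℂ χ ∧
    T.index ∣ Module.finrank ℂ χ / Module.finrank ℂ θ := by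
  have he : finrank ℂ (θ ⟶ χ.res N.subtype) ≠ 0 := by
    intro h
    have hsum := FDRep.sum_char_mul_char_inv θ (χ.res N.subtype)
    rw [h, Nat.cast_zero, mul_zero] at hsum
    apply hover
    simp only [← FDRep.char_inv]
    exact hsum
  have hT' (g : G) : g ∈ T ↔ (θ.conjugate g).character = θ.character := by
    rw [hT g, funext_iff]
    rfl
  have hdeg := FDRep.finrank_eq_index_mul_finrank_mul_finrank_hom χ θ he T hT'
  rw [hdeg, mul_left_comm, Nat.mul_div_cancel_left _ (FDRep.finrank_pos_of_simple θ)]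
  exact ⟨dvd_mul_right _ _, dvd_mul_right _ _⟩

/-- Clifford theory degree divisibility: if N ⊴ G, θ ∈ Irr(N), T = I_G(θ) is the inertia
group of θ, and χ ∈ Irr(G) lies over θ, then θ(1) ∣ χ(1) and |G : T| ∣ χ(1)/θ(1). -/
theorem clifford_degree_divides {G : Type} [Group G] [Fintype G] [DecidableEq G]
    (N : Subgroup G) [Fintype N] (hN : N.Normal)
    (θ : FDRep ℂ N) (hθ : CategoryTheory.Simple θ)
    (χ : FDRep ℂ G) (hχ : CategoryTheory.Simple χ)
    (hover : ∑ n : N, χ.character (n : G) * (starRingEnd ℂ) (θ.character n) ≠ 0)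
    (T : Subgroup G)
    (hT : ∀ g : G, g ∈ T ↔
      ∀ n : N, θ.character ⟨g * (n : G) * g⁻¹, hN.conj_mem n.1 n.2 g⟩ = θ.character n) :
    Module.finrank ℂ θ ∣ Module.finrank ℂ χ ∧
    T.index ∣ Module.finrank ℂ χ / Module.finrank ℂ θ :=
  clifford_degree_divides_general N hN θ hθ χ hχ hover T hT
end

section
/- Let N be a normal subgroup of a finite group G, let θ be an irreducible character of N, and suppose θ extends to an irreducible character θ₀ of G (i.e., the restriction of θ₀ to N equals θ). Then for every irreducible character ψ of G/N, the product θ(1)·ψ(1) is an irreducible character degree of G. -/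
/-!
Let `Ψ` be the inflation of `ψ` to `G`; we show that `θ₀ ⊗ Ψ` is irreducible by computing the
norm of its character. Since `θ₀` stays irreducible on `N`, the `N`-invariant endomorphisms of
`θ₀` are the scalars, which every `g ∈ G` fixes; taking traces, `∑_{n ∈ N} |χ_{θ₀}(gn)|² = |N|`
for every `g`. As `|χ_Ψ|²` is constant on the cosets `gN`, the norm of `χ_{θ₀} χ_Ψ` therefore
equals that of `χ_Ψ`, which is one because `ψ` is irreducible.
-/

open CategoryTheory MonoidalCategory Module Representation

universe u v

/-- The set of degrees of irreducible complex characters of a finite group. -/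
noncomputable def cd (G : Type) [Group G] [Fintype G] : Set ℕ :=
  {n | ∃ V : FDRep ℂ G, CategoryTheory.Simple V ∧ Module.finrank ℂ V = n}

theorem QuotientGroup.sum_mk_eq_card_nsmul {G M : Type*} [Group G] [Fintype G] [AddCommMonoid M]
    (N : Subgroup G) [Fintype (G ⧸ N)] (F : G ⧸ N → M) :
    ∑ g : G, F g = Nat.card N • ∑ q : G ⧸ N, F q := by
  classical
  have hfiber (q : G ⧸ N) : Fintype.card {g : G // (g : G ⧸ N) = q} = Nat.card N := by
    rw [← Nat.card_eq_fintype_card, ← mul_one (Nat.card N),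
      ← Nat.card_unique (α := ({q} : Set (G ⧸ N)))]
    exact QuotientGroup.card_preimage_mk N {q}
  rw [← Fintype.sum_fiberwise' (fun g : G => (g : G ⧸ N)) F, Finset.smul_sum]
  simp [hfiber]

theorem Subgroup.sum_mul_eq_sum_of_sum_coset_eq_card {G R : Type*} [Group G] [Fintype G]
    [CommRing R] [IsDomain R] [CharZero R] (N : Subgroup G) [Fintype N] {a b : G → R}
    (hb : ∀ g (n : N), b (g * n) = b g) (ha : ∀ g, ∑ n : N, a (g * n) = Nat.card N) :
    ∑ g, a g * b g = ∑ g, b g := by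
  refine mul_left_cancel₀ (Nat.cast_ne_zero.2 Nat.card_pos.ne' : (Nat.card N : R) ≠ 0) ?_
  calc (Nat.card N : R) * ∑ g, a g * b g = ∑ n : N, ∑ g, a (g * n) * b (g * n) := by
        rw [Nat.card_eq_fintype_card, ← Finset.card_univ, ← nsmul_eq_mul, ← Finset.sum_const]
        exact Finset.sum_congr rfl fun n _ =>
          (Fintype.sum_equiv (Equiv.mulRight (n : G)) _ _ fun _ => rfl).symm
    _ = ∑ g, (∑ n : N, a (g * n)) * b g := by
        rw [Finset.sum_comm]
        simp only [hb, Finset.sum_mul]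
    _ = Nat.card N * ∑ g, b g := by simp only [ha, Finset.mul_sum]

namespace Representation

variable {k G V : Type*} [Field k] [Group G] [AddCommGroup V] [Module k V] [FiniteDimensional k V]

theorem sum_character_mul_eq_card_mul_finrank_invariants (ρ : Representation k G V)
    (N : Subgroup G) [Fintype N] [Invertible (Fintype.card N : k)] (g : G)
    (hg : ∀ v ∈ invariants (ρ.comp N.subtype), ρ g v = v) :
    ∑ n : N, ρ.character (g * n) =
      Fintype.card N * finrank k (invariants (ρ.comp N.subtype)) := by
  set σ : Representation k N V := ρ.comp N.subtype
  have hfix : ρ g * σ.averageMap = σ.averageMap :=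
    LinearMap.ext fun v => hg _ (σ.averageMap_invariant v)
  have hsum : ∑ n : N, σ n = (Fintype.card N : k) • σ.averageMap := by
    simp [averageMap, GroupAlgebra.average, map_sum, smul_smul]
  calc ∑ n : N, ρ.character (g * n) = LinearMap.trace k V (ρ g * ∑ n : N, σ n) := by
        simp [character, Finset.mul_sum, σ]
    _ = Fintype.card N * finrank k σ.invariants := by
        rw [hsum, mul_smul_comm, hfix, map_smul, σ.isProj_averageMap.trace, smul_eq_mul]

end Representation

namespace FDRep

variable {k : Type u} [Field k] [CharZero k]

theorem sum_char_mul_char_inv_coset_eq_card {G : Type v} [Group G] (V : FDRep k G)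
    (N : Subgroup G) [Fintype N]
    (hV : ∑ n : N, V.character n * V.character (n : G)⁻¹ = Nat.card N) (g : G) :
    ∑ n : N, V.character (g * n) * V.character (g * n)⁻¹ = Nat.card N := by
  let ρ := linHom V.ρ V.ρ
  let σ : Representation k N (V →ₗ[k] V) := ρ.comp N.subtype
  have : Invertible (Nat.card N : k) := invertibleOfNonzero (NeZero.ne _)
  have : Invertible (Fintype.card N : k) := invertibleOfNonzero (NeZero.ne _)
  have hfinrank : finrank k (invariants σ) = 1 := by
    have h := σ.card_inv_mul_sum_char_eq_finrank
    have h' : ∑ n : N, σ.character n = Nat.card N := by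
      rw [← hV]
      exact Finset.sum_congr rfl fun n _ =>
        (Representation.char_linHom V.ρ V.ρ n).trans (mul_comm _ _)
    rw [h', inv_mul_cancel_of_invertible] at h
    exact_mod_cast h.symm
  have hρid (h : G) : ρ h LinearMap.id = LinearMap.id := by
    ext v
    simp [ρ]
  have hid0 : (LinearMap.id : V →ₗ[k] V) ≠ 0 := by
    intro h0
    have : Subsingleton (Module.End k V) := subsingleton_of_zero_eq_one h0.symm
    simp [finrank_zero_of_subsingleton] at hfinrank
  have hfix : ∀ f ∈ invariants σ, ρ g f = f := by
    intro f hf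
    obtain ⟨c, hc⟩ := (finrank_eq_one_iff_of_nonzero' (⟨_, fun n => hρid n⟩ : invariants σ)
      fun h => hid0 (congrArg Subtype.val h)).1 hfinrank ⟨f, hf⟩
    obtain rfl : c • LinearMap.id = f := congrArg Subtype.val hc
    rw [map_smul, hρid]
  have h := ρ.sum_character_mul_eq_card_mul_finrank_invariants N g hfix
  rw [hfinrank, Nat.cast_one, mul_one, ← Nat.card_eq_fintype_card] at h
  rw [← h]
  exact Finset.sum_congr rfl fun n _ =>
    (mul_comm _ _).trans (Representation.char_linHom V.ρ V.ρ _).symm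

theorem simple_of_comp_mk [IsAlgClosed k] {G : Type u} [Group G] [Fintype G]
    (N : Subgroup G) [N.Normal] (V : FDRep k (G ⧸ N)) [Simple V] :
    Simple (FDRep.of (V.ρ.comp (QuotientGroup.mk' N))) := by
  classical
  have hV := (simple_iff_char_is_norm_one V).1 inferInstance
  rw [simple_iff_char_is_norm_one, ← N.card_mul_index, Nat.cast_mul, Subgroup.index, ← hV,
    ← nsmul_eq_mul, ← QuotientGroup.sum_mk_eq_card_nsmul]
  rfl

end FDRep

theorem gallagher_degrees_general {G : Type} [Group G] [Fintype G]
    (N : Subgroup G) (hN : N.Normal)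
    (θ : FDRep ℂ N) (hθ : CategoryTheory.Simple θ)
    (θ₀ : FDRep ℂ G)
    (hext : ∀ n : N, θ₀.character (n : G) = θ.character n)
    (ψ : FDRep ℂ (G ⧸ N)) (hψ : CategoryTheory.Simple ψ) :
    Module.finrank ℂ θ * Module.finrank ℂ ψ ∈ cd G := by
  classical
  let Ψ : FDRep ℂ G := FDRep.of (ψ.ρ.comp (QuotientGroup.mk' N))
  have hΨ (g : G) :
      Ψ.character g * Ψ.character g⁻¹ = ψ.character g * ψ.character (g : G ⧸ N)⁻¹ := rfl
  have hθ₀N : ∑ n : N, θ₀.character n * θ₀.character (n : G)⁻¹ = Nat.card N := by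
    rw [← (FDRep.simple_iff_char_is_norm_one θ).1 hθ]
    exact Finset.sum_congr rfl fun n _ => by rw [← Subgroup.coe_inv, hext, hext]
  refine ⟨θ₀ ⊗ Ψ, ?_, ?_⟩
  · rw [FDRep.simple_iff_char_is_norm_one]
    calc ∑ g, (θ₀ ⊗ Ψ).character g * (θ₀ ⊗ Ψ).character g⁻¹
        = ∑ g, θ₀.character g * θ₀.character g⁻¹ * (Ψ.character g * Ψ.character g⁻¹) := by
          simp only [FDRep.char_tensor, Pi.mul_apply, mul_mul_mul_comm]
      _ = ∑ g, Ψ.character g * Ψ.character g⁻¹ := by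
          simp only [hΨ]
          refine N.sum_mul_eq_sum_of_sum_coset_eq_card (fun g n => ?_)
            (θ₀.sum_char_mul_char_inv_coset_eq_card N hθ₀N)
          rw [QuotientGroup.mk_mul, (QuotientGroup.eq_one_iff _).2 n.2, mul_one]
      _ = Nat.card G := (FDRep.simple_iff_char_is_norm_one Ψ).1 (FDRep.simple_of_comp_mk N ψ)
  · have hdim : finrank ℂ θ₀ = finrank ℂ θ := by
      simpa using hext 1
    show finrank ℂ (TensorProduct ℂ θ₀ ψ) = _
    rw [finrank_tensorProduct, hdim]

/-- Gallagher's theorem (degree consequence): if N ⊴ G, θ ∈ Irr(N) extends to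
θ₀ ∈ Irr(G), then for every ψ ∈ Irr(G/N), θ(1)·ψ(1) ∈ cd(G). -/
theorem gallagher_degrees {G : Type} [Group G] [Fintype G]
    (N : Subgroup G) (hN : N.Normal)
    (θ : FDRep ℂ N) (hθ : CategoryTheory.Simple θ)
    (θ₀ : FDRep ℂ G) (hθ₀ : CategoryTheory.Simple θ₀)
    (hext : ∀ n : N, θ₀.character (n : G) = θ.character n)
    (ψ : FDRep ℂ (G ⧸ N)) (hψ : CategoryTheory.Simple ψ) :
    Module.finrank ℂ θ * Module.finrank ℂ ψ ∈ cd G :=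
  gallagher_degrees_general N hN θ hθ θ₀ hext ψ hψ
end

section
/- Let N ⊴ G be finite groups with G/N nonabelian simple, and let θ ∈ Irr(N) be G-invariant. If the Schur multiplier of G/N is trivial, then θ extends to an irreducible character of G. -/
/-!
For every `g ∈ G` the conjugate `θ^g` has the character of `θ`, so it is isomorphic to `θ`.
Choosing these isomorphisms along a transversal of `N` yields invertible operators `P g` on the
space of `θ` with `P (n g) = θ(n) P g` and `P (g n) = P g θ(n)`. By Schur's lemma
`P g P h = c(gN, hN) P (gh)` for a scalar `c`, and associativity makes `c` a 2-cocycle of `G/N`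
with values in `ℂˣ`. As `H²(G/N, ℂˣ) = 0`, `c` is a coboundary, and rescaling `P` by it gives a
representation of `G` extending `θ`; it is irreducible because its restriction to `N` is.
-/

theorem exists_eq_div_of_subsingleton_H2 {Q A : Type} [Group Q] [CommGroup A]
    [Subsingleton (groupCohomology (Rep.trivial ℤ Q (Additive A)) 2)] (c : Q → Q → A)
    (hc : ∀ q r t, c (q * r) t * c q r = c r t * c q (r * t)) :
    ∃ b : Q → A, ∀ q r, c q r = b (q * r) / (b q * b r) := by
  let f : groupCohomology.cocycles₂ (Rep.trivial ℤ Q (Additive A)) :=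
    ⟨fun p => Additive.ofMul (c p.1 p.2),
      (groupCohomology.mem_cocycles₂_iff _).2 fun q r t => congrArg Additive.ofMul (hc q r t)⟩
  obtain ⟨b, hb⟩ := (groupCohomology.H2π_eq_zero_iff f).1 (Subsingleton.elim _ _)
  refine ⟨fun q => (Additive.toMul (b q))⁻¹, fun q r => Additive.ofMul.injective ?_⟩
  have hbqr : Additive.ofMul (c q r) = b r - b (q * r) + b q := (congrFun hb (q, r)).symm
  simp only [hbqr, ofMul_div, ofMul_mul, ofMul_inv, ofMul_toMul]
  abel

section ProjectiveLift

variable {G E : Type*} {Q A : Type} [Group G] [Group E] [Group Q] [CommGroup A]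
  {π : G →* Q} {ι : A →* E} {P : G → E} {c : Q → Q → A}

theorem cocycle_of_mul_eq (hπ : Function.Surjective π) (hι : Function.Injective ι)
    (hcomm : ∀ a x, Commute (ι a) x)
    (hP : ∀ g h, P g * P h = ι (c (π g) (π h)) * P (g * h)) (q r t : Q) :
    c (q * r) t * c q r = c r t * c q (r * t) := by
  obtain ⟨g, rfl⟩ := hπ q
  obtain ⟨h, rfl⟩ := hπ r
  obtain ⟨k, rfl⟩ := hπ t
  apply hι
  refine mul_right_cancel (b := P (g * h * k)) ?_
  calc ι (c (π g * π h) (π k) * c (π g) (π h)) * P (g * h * k)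
      = P g * P h * P k := by
        rw [hP g h, mul_assoc (ι _), hP, ← mul_assoc, map_mul π, mul_comm (c (π g * π h) (π k)),
          map_mul]
    _ = ι (c (π h) (π k) * c (π g) (π h * π k)) * P (g * h * k) := by
        rw [mul_assoc, hP h k, ← mul_assoc, ← (hcomm _ _).eq, mul_assoc, hP, ← mul_assoc,
          ← map_mul, map_mul π, mul_assoc g]

theorem exists_monoidHom_eq_mul_of_mul_eq
    [Subsingleton (groupCohomology (Rep.trivial ℤ Q (Additive A)) 2)]
    (hπ : Function.Surjective π) (hι : Function.Injective ι) (hcomm : ∀ a x, Commute (ι a) x)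
    (hP : ∀ g h, P g * P h = ι (c (π g) (π h)) * P (g * h)) :
    ∃ (ρ : G →* E) (b : Q → A), ∀ g, ρ g = ι (b (π g)) * P g := by
  obtain ⟨b, hb⟩ := exists_eq_div_of_subsingleton_H2 c (cocycle_of_mul_eq hπ hι hcomm hP)
  refine ⟨MonoidHom.mk' (fun g => ι (b (π g)) * P g) fun g h => ?_, b, fun g => rfl⟩
  calc ι (b (π (g * h))) * P (g * h)
      = ι (b (π g) * b (π h) * c (π g) (π h)) * P (g * h) := by
        rw [hb, map_mul π, mul_div_cancel]
    _ = ι (b (π g)) * ι (b (π h)) * (P g * P h) := by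
        simp only [hP, map_mul, mul_assoc]
    _ = ι (b (π g)) * P g * (ι (b (π h)) * P h) := by
        simp only [mul_assoc, (hcomm (b (π h)) (P g)).left_comm]

end ProjectiveLift

section Equivariant

variable {G E : Type*} [Group G] [Group E] {N : Subgroup G} [N.Normal] {Θ : N →* E}

theorem exists_equivariant_of_intertwining (T : G → E)
    (hT : ∀ g (n : N), T g * Θ n = Θ (MulAut.conjNormal g n) * T g) :
    ∃ P : G → E, (∀ (n : N) g, P (n * g) = Θ n * P g) ∧ (∀ g (n : N), P (g * n) = P g * Θ n) := by
  let s : G → G := fun g => (g : G ⧸ N).out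
  have hs_mem : ∀ g, (s g)⁻¹ * g ∈ N := fun g => QuotientGroup.eq.1 (QuotientGroup.out_eq' _)
  have hs_left : ∀ (n : N) g, s (n * g) = s g := fun n g => by
    simp only [s, QuotientGroup.mk_mul, (QuotientGroup.eq_one_iff _).2 n.2, one_mul]
  have hs_right : ∀ g (n : N), s (g * n) = s g := fun g n => by
    simp only [s, QuotientGroup.mk_mul_of_mem g n.2]
  let m : G → N := fun g => ⟨(s g)⁻¹ * g, hs_mem g⟩
  refine ⟨fun g => T (s g) * Θ (m g), fun n g => ?_, fun g n => ?_⟩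
  · have hm : m (n * g) = MulAut.conjNormal (s g)⁻¹ n * m g := Subtype.ext <| by
      simp only [m, hs_left, Subgroup.coe_mul, MulAut.conjNormal_apply]
      group
    show T (s (n * g)) * Θ (m (n * g)) = Θ n * (T (s g) * Θ (m g))
    rw [hm, hs_left, map_mul, ← mul_assoc, hT, ← MulAut.mul_apply, ← map_mul, mul_inv_cancel,
      map_one, MulAut.one_apply, mul_assoc]
  · have hm : m (g * n) = m g * n := Subtype.ext <| by
      simp only [m, hs_right, Subgroup.coe_mul, mul_assoc]
    show T (s (g * n)) * Θ (m (g * n)) = T (s g) * Θ (m g) * Θ n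
    rw [hm, hs_right, map_mul, mul_assoc]

variable {A : Type*} [CommGroup A] {ι : A →* E} {P : G → E}

theorem mul_conjNormal_inv (hl : ∀ (n : N) g, P (n * g) = Θ n * P g)
    (hr : ∀ g (n : N), P (g * n) = P g * Θ n) (g : G) (n : N) :
    P g * Θ (MulAut.conjNormal g⁻¹ n) = Θ n * P g := by
  rw [← hr, ← hl]
  congr 1
  simp only [MulAut.conjNormal_apply, inv_inv]
  group

theorem exists_mul_eq_cocycle_mul
    (hcent : ∀ x : E, (∀ n, Commute x (Θ n)) → x ∈ ι.range)
    (hl : ∀ (n : N) g, P (n * g) = Θ n * P g) (hr : ∀ g (n : N), P (g * n) = P g * Θ n) :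
    ∃ c : G ⧸ N → G ⧸ N → A, ∀ g h, P g * P h = ι (c g h) * P (g * h) := by
  let k : G → G → E := fun g h => P g * P h * (P (g * h))⁻¹
  have hk_right : ∀ g h (n : N), k g (h * n) = k g h := fun g h n => by
    simp only [k, ← mul_assoc, hr, mul_inv_rev, mul_inv_cancel_right]
  have hk_left : ∀ g h (n : N), k (g * n) h = k g h := fun g h n => by
    have hnh : g * n * h = g * h * MulAut.conjNormal h⁻¹ n := by
      simp only [MulAut.conjNormal_apply, inv_inv]; group
    simp only [k]
    rw [hr g n, hnh, hr (g * h), mul_assoc (P g), ← mul_conjNormal_inv hl hr h n]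
    group
  have hk_coset : ∀ g h, k g h = k (g : G ⧸ N).out (h : G ⧸ N).out := fun g h => by
    obtain ⟨n, hn⟩ := QuotientGroup.mk_out_eq_mul N g
    obtain ⟨n', hn'⟩ := QuotientGroup.mk_out_eq_mul N h
    rw [hn, hn', hk_left, hk_right]
  have hk_comm : ∀ g h (n : N), Commute (k g h) (Θ n) := fun g h n => by
    have hconj : k (n * g) h = Θ n * k g h * (Θ n)⁻¹ := by
      simp only [k, mul_assoc (n : G), hl]
      group
    have hng : (n : G) * g = g * MulAut.conjNormal g⁻¹ n := by
      simp only [MulAut.conjNormal_apply, inv_inv]; group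
    rw [hng, hk_left, eq_mul_inv_iff_mul_eq] at hconj
    exact hconj
  choose c hc using fun q r : G ⧸ N => hcent (k q.out r.out) (hk_comm _ _)
  refine ⟨c, fun g h => ?_⟩
  rw [hc, ← hk_coset, inv_mul_cancel_right]

end Equivariant

theorem exists_extension_of_subsingleton_H2 {G : Type} {E : Type*} {A : Type} [Group G] [Group E]
    [CommGroup A] {N : Subgroup G} [N.Normal]
    [Subsingleton (groupCohomology (Rep.trivial ℤ (G ⧸ N) (Additive A)) 2)]
    (Θ : N →* E) (ι : A →* E) (hι : Function.Injective ι) (hcomm : ∀ a x, Commute (ι a) x)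
    (hcent : ∀ x : E, (∀ n, Commute x (Θ n)) → x ∈ ι.range)
    (hT : ∀ g, ∃ T : E, ∀ n, T * Θ n = Θ (MulAut.conjNormal g n) * T) :
    ∃ ρ : G →* E, ∀ n : N, ρ n = Θ n := by
  choose T hT using hT
  obtain ⟨P, hl, hr⟩ := exists_equivariant_of_intertwining T hT
  obtain ⟨c, hc⟩ := exists_mul_eq_cocycle_mul hcent hl hr
  obtain ⟨ρ, b, hρ⟩ :=
    exists_monoidHom_eq_mul_of_mul_eq (QuotientGroup.mk'_surjective N) hι hcomm hc
  have hρ1 : ι (b 1) * P 1 = 1 := by simpa using (hρ 1).symm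
  refine ⟨ρ, fun n => ?_⟩
  have hn : QuotientGroup.mk' N n = 1 := (QuotientGroup.eq_one_iff _).2 n.2
  calc ρ n = ι (b 1) * (Θ n * P 1) := by rw [hρ, hn, ← hl, mul_one]
    _ = Θ n * (ι (b 1) * P 1) := (hcomm _ _).left_comm _
    _ = Θ n := by rw [hρ1, mul_one]

open CategoryTheory

namespace FDRep

variable {k G : Type} [Field k] [Group G]

theorem nontrivial_of_simple (V : FDRep k G) [Simple V] : Nontrivial V := by
  by_contra h
  rw [not_nontrivial_iff_subsingleton] at h
  exact id_nonzero V (Action.Hom.ext (FGModuleCat.hom_ext (LinearMap.ext fun v =>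
    Subsingleton.elim _ _)))

theorem exists_eq_smul_id_of_commute [IsAlgClosed k] (V : FDRep k G) [Simple V]
    (f : V →ₗ[k] V) (hf : ∀ g, f ∘ₗ V.ρ g = V.ρ g ∘ₗ f) : ∃ c : k, f = c • LinearMap.id := by
  let φ : V ⟶ V := ⟨FGModuleCat.ofHom f, fun g => FGModuleCat.hom_ext (hf g)⟩
  obtain ⟨c, hc⟩ := endomorphism_simple_eq_smul_id k φ
  exact ⟨c, (congrArg (fun φ => φ.hom.hom.hom) hc).symm⟩

theorem nonempty_iso_of_character_eq [IsAlgClosed k] [CharZero k] [Fintype G]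
    {V W : FDRep k G} [Simple V] (h : V.character = W.character) : Nonempty (V ≅ W) := by
  have hV := (simple_iff_char_is_norm_one V).1 inferInstance
  have : Simple W := (simple_iff_char_is_norm_one W).2 (h ▸ hV)
  have := char_orthonormal V W
  rw [← h, hV, inv_mul_cancel₀ (by simp)] at this
  by_contra hne
  simp [hne] at this

theorem simple_of_simple_comp [IsAlgClosed k] [Finite G] [NeZero (Nat.card G : k)] {H V : Type}
    [Group H] [AddCommGroup V] [Module k V] [Module.Finite k V] (ρ : Representation k G V)
    (φ : H →* G) [Simple (FDRep.of (ρ.comp φ))] : Simple (FDRep.of ρ) := by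
  let res (f : FDRep.of ρ ⟶ FDRep.of ρ) : FDRep.of (ρ.comp φ) ⟶ FDRep.of (ρ.comp φ) :=
    ⟨f.hom, fun h => f.comm (φ h)⟩
  have hid : 𝟙 (FDRep.of ρ) ≠ 0 := fun h => by
    have h' := congrArg Action.Hom.hom h
    exact id_nonzero (FDRep.of (ρ.comp φ)) (Action.Hom.ext h')
  rw [simple_iff_end_is_rank_one, finrank_eq_one_iff_of_nonzero' _ hid]
  intro f
  obtain ⟨c, hc⟩ := endomorphism_simple_eq_smul_id k (res f)
  have hc' := congrArg Action.Hom.hom hc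
  exact ⟨c, Action.Hom.ext hc'⟩

variable (V : FDRep k G)

abbrev scalarUnits : kˣ →* (Module.End k V)ˣ := Units.map (algebraMap k (Module.End k V))

theorem scalarUnits_injective [Nontrivial V] : Function.Injective (scalarUnits V) :=
  Units.map_injective (algebraMap k (Module.End k V)).injective

theorem commute_scalarUnits (a : kˣ) (x : (Module.End k V)ˣ) : Commute (scalarUnits V a) x :=
  Units.ext (Algebra.commutes _ _)

theorem mem_range_scalarUnits_of_commute [IsAlgClosed k] [Simple V] (x : (Module.End k V)ˣ)
    (hx : ∀ g, Commute x (Representation.asGroupHom V.ρ g)) : x ∈ (scalarUnits V).range := by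
  have := nontrivial_of_simple V
  obtain ⟨c, hc⟩ := exists_eq_smul_id_of_commute V x fun g => by
    simpa [Representation.asGroupHom_apply, Module.End.mul_eq_comp] using
      congrArg Units.val (hx g).eq
  have hc0 : c ≠ 0 := by
    rintro rfl
    rw [zero_smul] at hc
    exact x.ne_zero hc
  refine ⟨Units.mk0 c hc0, Units.ext ?_⟩
  simp [hc, Algebra.algebraMap_eq_smul_one, Module.End.one_eq_id]

theorem exists_units_conj_eq_of_character_eq [IsAlgClosed k] [CharZero k] [Fintype G] [Simple V]
    (σ : G →* G) (hσ : ∀ g, V.character (σ g) = V.character g) :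
    ∃ T : (Module.End k V)ˣ,
      ∀ g, T * Representation.asGroupHom V.ρ g = Representation.asGroupHom V.ρ (σ g) * T := by
  obtain ⟨i⟩ := nonempty_iso_of_character_eq (W := of (V.ρ.comp σ)) (funext fun g => (hσ g).symm)
  refine ⟨LinearMap.GeneralLinearGroup.ofLinearEquiv (M := V)
    (isoToLinearEquiv (W := of (V.ρ.comp σ)) i), fun g => Units.ext ?_⟩
  have hconj : V.ρ (σ g) = (isoToLinearEquiv i).conj (V.ρ g) := Iso.conj_ρ i g
  ext v
  simp [Representation.asGroupHom_apply, hconj]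

end FDRep

theorem invariant_character_extends_general {G : Type} [Group G] [Fintype G]
    (N : Subgroup G) (hN : N.Normal)
    (θ : FDRep ℂ N) (hθ : CategoryTheory.Simple θ)
    (hinv : ∀ g : G, ∀ n : N,
      θ.character ⟨g * (n : G) * g⁻¹, hN.conj_mem n.1 n.2 g⟩ = θ.character n)
    (hschur : Subsingleton
      (groupCohomology (Rep.trivial ℤ (G ⧸ N) (Additive ℂˣ)) 2)) :
    ∃ χ : FDRep ℂ G, CategoryTheory.Simple χ ∧
      ∀ n : N, χ.character (n : G) = θ.character n := by
  have := θ.nontrivial_of_simple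
  have := Fintype.ofFinite N
  obtain ⟨ρ, hρ⟩ := exists_extension_of_subsingleton_H2 (Representation.asGroupHom θ.ρ)
    (FDRep.scalarUnits θ) θ.scalarUnits_injective θ.commute_scalarUnits
    θ.mem_range_scalarUnits_of_commute
    fun g => θ.exists_units_conj_eq_of_character_eq (MulAut.conjNormal (H := N) g).toMonoidHom
      (hinv g)
  let χ : Representation ℂ G θ := (Units.coeHom _).comp ρ
  have hres : χ.comp N.subtype = θ.ρ := MonoidHom.ext fun n => by
    simp [χ, hρ, Representation.asGroupHom_apply]
  have : Simple (FDRep.of (χ.comp N.subtype)) := hres ▸ hθ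
  refine ⟨FDRep.of χ, FDRep.simple_of_simple_comp χ N.subtype, fun n => ?_⟩
  show LinearMap.trace ℂ _ (χ n) = LinearMap.trace ℂ _ (θ.ρ n)
  rw [← hres]
  rfl

/-- Isaacs, Theorem 11.7: if N ⊴ G with G/N nonabelian simple, θ ∈ Irr(N) is
G-invariant, and the Schur multiplier H²(G/N, ℂ*) is trivial, then θ extends to an
irreducible character of G. -/
theorem invariant_character_extends {G : Type} [Group G] [Fintype G]
    (N : Subgroup G) (hN : N.Normal)
    (hsimple : IsSimpleGroup (G ⧸ N))
    (hnonab : ¬ ∀ a b : G ⧸ N, a * b = b * a)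
    (θ : FDRep ℂ N) (hθ : CategoryTheory.Simple θ)
    (hinv : ∀ g : G, ∀ n : N,
      θ.character ⟨g * (n : G) * g⁻¹, hN.conj_mem n.1 n.2 g⟩ = θ.character n)
    (hschur : Subsingleton
      (groupCohomology (Rep.trivial ℤ (G ⧸ N) (Additive ℂˣ)) 2)) :
    ∃ χ : FDRep ℂ G, CategoryTheory.Simple χ ∧
      ∀ n : N, χ.character (n : G) = θ.character n :=
  invariant_character_extends_general N hN θ hθ hinv hschur
end
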